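/- arXiv:1404.7821 — 3 statements merged into one kernel-verified Lean document; each statement's English description precedes it below -/
import Mathlib

section
/- Define for a symmetric 2×2 real matrix W and λ ≥ 0 the penalized modified determinant det⁺_λ(W) := max(0,W_{1,1})·max(0,W_{2,2}) − W_{1,2}² − λ[(min(0,W_{1,1}))² + (min(0,W_{2,2}))²]. If f > 0 and det⁺_λ(W) = f, then W is positive definite and det(W) = f. Conversely, if W is positive definite and det(W) = f, then det⁺_λ(W) = f. -/
/-!
Where both diagonal entries are nonnegative, `det⁺_λ W` is just `det W`. Otherwise the
product `max 0 W₁₁ · max 0 W₂₂` vanishes and the remaining terms are nonpositive, so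
`det⁺_λ W ≤ 0 < f`.
Positive definiteness then follows from `W₁₁ > 0` and `det W > 0` by completing the square.
-/

open scoped Matrix

/-- The penalized modified determinant
`det⁺_λ W = max 0 W₁₁ * max 0 W₂₂ - W₁₂² - λ ((min 0 W₁₁)² + (min 0 W₂₂)²)`. -/
noncomputable def detPlusLam (lam : ℝ) (W : Matrix (Fin 2) (Fin 2) ℝ) : ℝ :=
  max 0 (W 0 0) * max 0 (W 1 1) - (W 0 1) ^ 2 -
    lam * ((min 0 (W 0 0)) ^ 2 + (min 0 (W 1 1)) ^ 2)

namespace Matrix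

theorem IsSymm.det_fin_two {R : Type*} [CommRing R] {W : Matrix (Fin 2) (Fin 2) R}
    (hW : W.IsSymm) : W.det = W 0 0 * W 1 1 - W 0 1 ^ 2 := by
  rw [Matrix.det_fin_two, hW.apply 0 1]
  ring

theorem IsSymm.dotProduct_mulVec_fin_two {R : Type*} [CommRing R] [StarRing R] [TrivialStar R]
    {W : Matrix (Fin 2) (Fin 2) R} (hW : W.IsSymm) (x : Fin 2 → R) :
    star x ⬝ᵥ W *ᵥ x = W 0 0 * x 0 ^ 2 + 2 * W 0 1 * x 0 * x 1 + W 1 1 * x 1 ^ 2 := by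
  simp only [dotProduct, mulVec, Fin.sum_univ_two, star_trivial, hW.apply 0 1]
  ring

theorem IsSymm.posDef_of_pos_of_det_pos {R : Type*} [Field R] [LinearOrder R]
    [IsStrictOrderedRing R] [StarRing R] [TrivialStar R] {W : Matrix (Fin 2) (Fin 2) R}
    (hW : W.IsSymm) (h00 : 0 < W 0 0) (hdet : 0 < W.det) : W.PosDef := by
  refine PosDef.of_dotProduct_mulVec_pos (isHermitian_iff_isSymm.mpr hW) fun x hx => ?_
  rw [hW.dotProduct_mulVec_fin_two]
  rw [hW.det_fin_two] at hdet
  have hsq : W 0 0 * (W 0 0 * x 0 ^ 2 + 2 * W 0 1 * x 0 * x 1 + W 1 1 * x 1 ^ 2) =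
      (W 0 0 * x 0 + W 0 1 * x 1) ^ 2 + (W 0 0 * W 1 1 - W 0 1 ^ 2) * x 1 ^ 2 := by ring
  refine pos_of_mul_pos_right (hsq ▸ ?_) h00.le
  rcases eq_or_ne (x 1) 0 with hx1 | hx1
  · have hx0 : x 0 ≠ 0 := fun hx0 => hx (funext fun i => by fin_cases i <;> assumption)
    rw [hx1, mul_zero, add_zero, zero_pow two_ne_zero, mul_zero, add_zero]
    exact sq_pos_of_ne_zero (mul_ne_zero h00.ne' hx0)
  · positivity

end Matrix

section

variable {lam : ℝ} {W : Matrix (Fin 2) (Fin 2) ℝ}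

theorem detPlusLam_eq_det_of_diag_nonneg (hW : W.IsSymm) (h00 : 0 ≤ W 0 0) (h11 : 0 ≤ W 1 1) :
    detPlusLam lam W = W.det := by
  simp [detPlusLam, h00, h11, hW.det_fin_two]

theorem diag_pos_of_detPlusLam_pos (hlam : 0 ≤ lam) (h : 0 < detPlusLam lam W) :
    0 < W 0 0 ∧ 0 < W 1 1 := by
  have hpen : 0 ≤ lam * ((min 0 (W 0 0)) ^ 2 + (min 0 (W 1 1)) ^ 2) := by positivity
  by_contra! hle
  have hmax : max 0 (W 0 0) * max 0 (W 1 1) = 0 := by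
    rcases le_or_gt (W 0 0) 0 with h0 | h0
    · simp [h0]
    · simp [hle h0]
  rw [detPlusLam, hmax] at h
  linarith [sq_nonneg (W 0 1)]

end

/-- If `f > 0` and `det⁺_λ W = f` then `W` is positive definite with `det W = f`;
conversely if `W` is positive definite and `det W = f` then `det⁺_λ W = f`. -/
theorem detPlusLam_eq_iff (W : Matrix (Fin 2) (Fin 2) ℝ) (hsymm : W.IsSymm)
    (lam f : ℝ) (hlam : 0 ≤ lam) (hf : 0 < f) :
    (detPlusLam lam W = f → W.PosDef ∧ W.det = f) ∧
      (W.PosDef → W.det = f → detPlusLam lam W = f) := by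
  constructor
  · intro h
    obtain ⟨h00, h11⟩ := diag_pos_of_detPlusLam_pos hlam (h ▸ hf)
    have hdet : W.det = f :=
      (detPlusLam_eq_det_of_diag_nonneg hsymm h00.le h11.le).symm.trans h
    exact ⟨hsymm.posDef_of_pos_of_det_pos h00 (hdet ▸ hf), hdet⟩
  · intro hpd hdet
    rw [detPlusLam_eq_det_of_diag_nonneg hsymm hpd.diag_pos.le hpd.diag_pos.le, hdet]
end

section
/- The function u(x) = (1/2)(max(0, ‖x − x₀‖ − 0.2))² with x₀ = (1/2, 1/2) is C¹ on ℝ² and convex, and at every point x with ‖x − x₀‖ > 0.2 (where u is twice differentiable) it satisfies det(D²u(x)) = 1 − 0.2/‖x − x₀‖. -/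
noncomputable def Hess (u : EuclideanSpace ℝ (Fin 2) → ℝ)
    (x : EuclideanSpace ℝ (Fin 2)) : Matrix (Fin 2) (Fin 2) ℝ :=
  Matrix.of fun i j =>
    fderiv ℝ (fun y => fderiv ℝ u y (EuclideanSpace.single j 1)) x
      (EuclideanSpace.single i 1)

/-!
Outside the closed ball `‖x - c‖ ≤ R` the function is `½ (r - R)²` with `r = ‖x - c‖`, so its
gradient is `(1 - R/r) (x - c)` and its Hessian is `(1 - R/r) I + (R/r³) (x - c)(x - c)ᵀ`. The
rank-one term raises the radial eigenvalue from `1 - R/r` to `1`, so in the plane the determinant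
is `1 - R/r`. Inside the open ball the function vanishes, and `s ↦ ½ max(0, s)²` is `C¹` with
derivative `max 0 s`, which glues the two regions together in `C¹`. Convexity holds because
`max 0 (r - R)` is convex and nonnegative.
-/

open Filter Topology Set
open scoped RealInnerProductSpace

theorem hasDerivAt_half_sq_max_zero (t : ℝ) :
    HasDerivAt (fun s : ℝ => 1 / 2 * max 0 s ^ 2) (max 0 t) t := by
  refine hasDerivAt_of_hasDerivAt_of_ne' (x := 0) (fun s hs => ?_) (by fun_prop) (by fun_prop) t
  rcases hs.lt_or_gt with hs | hs
  · have hzero : (fun s : ℝ => 1 / 2 * max 0 s ^ 2) =ᶠ[𝓝 s] fun _ => 0 := by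
      filter_upwards [eventually_lt_nhds hs] with r hr
      simp [max_eq_left hr.le]
    simpa [max_eq_left hs.le] using (hasDerivAt_const s (0 : ℝ)).congr_of_eventuallyEq hzero
  · have hsq : (fun s : ℝ => 1 / 2 * max 0 s ^ 2) =ᶠ[𝓝 s] fun s => 1 / 2 * s ^ 2 := by
      filter_upwards [eventually_gt_nhds hs] with r hr
      rw [max_eq_right hr.le]
    have := ((hasDerivAt_pow 2 s).const_mul (1 / 2 : ℝ)).congr_of_eventuallyEq hsq
    simpa [max_eq_right hs.le] using this

theorem contDiff_half_sq_max_zero : ContDiff ℝ 1 (fun s : ℝ => 1 / 2 * max 0 s ^ 2) :=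
  contDiff_one_iff_deriv.2 ⟨fun t => (hasDerivAt_half_sq_max_zero t).differentiableAt, by
    rw [funext fun t => (hasDerivAt_half_sq_max_zero t).deriv]
    fun_prop⟩

section

variable {E : Type*} [NormedAddCommGroup E] {c x : E} {R : ℝ}

noncomputable def halfSqDistBall (c : E) (R : ℝ) (x : E) : ℝ :=
  1 / 2 * max 0 (‖x - c‖ - R) ^ 2

theorem halfSqDistBall_eventuallyEq (hx : R < ‖x - c‖) :
    halfSqDistBall c R =ᶠ[𝓝 x] fun y => 1 / 2 * (‖y - c‖ - R) ^ 2 := by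
  have hnear : ∀ᶠ y in 𝓝 x, R < ‖y - c‖ := continuousAt_const.eventually_lt (by fun_prop) hx
  filter_upwards [hnear] with y hy
  rw [halfSqDistBall, max_eq_right (sub_nonneg.2 (le_of_lt hy))]

theorem convexOn_halfSqDistBall [NormedSpace ℝ E] :
    ConvexOn ℝ univ (halfSqDistBall c R) := by
  have hdist : ConvexOn ℝ univ fun y : E => ‖y - c‖ - R := by
    simpa only [dist_eq_norm, Pi.add_def, ← sub_eq_add_neg] using
      (convexOn_dist c convex_univ).add_const (-R)
  have hpos : ConvexOn ℝ univ fun y : E => max 0 (‖y - c‖ - R) :=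
    (convexOn_const 0 convex_univ).sup hdist
  exact ((hpos.pow (fun _ _ => le_max_left _ _) 2).smul (by norm_num : (0 : ℝ) ≤ 1 / 2))

variable [InnerProductSpace ℝ E]

theorem hasFDerivAt_norm_sub (hx : x ≠ c) :
    HasFDerivAt (fun y => ‖y - c‖) (‖x - c‖⁻¹ • innerSL ℝ (x - c)) x := by
  have hsq : ‖x - c‖ ^ 2 ≠ 0 := by simpa [sub_eq_zero] using hx
  have h := (Real.hasDerivAt_sqrt hsq).comp_hasFDerivAt x
    ((hasFDerivAt_id (𝕜 := ℝ) x).sub_const c).norm_sq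
  simp only [Function.comp_def, id_eq, Real.sqrt_sq_eq_abs, abs_norm] at h
  refine h.congr_fderiv ?_
  ext y
  simp only [one_div, mul_inv_rev, map_sub, ContinuousLinearMap.comp_id, smul_apply, sub_apply,
    coe_innerSL_apply, nsmul_eq_mul, Nat.cast_ofNat, smul_eq_mul]
  field_simp

theorem contDiff_halfSqDistBall (hR : 0 < R) : ContDiff ℝ 1 (halfSqDistBall c R) := by
  refine contDiff_iff_contDiffAt.2 fun x => ?_
  rcases eq_or_ne x c with rfl | hx
  · have hzero : halfSqDistBall x R =ᶠ[𝓝 x] fun _ => 0 := by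
      filter_upwards [Metric.ball_mem_nhds x hR] with y hy
      rw [mem_ball_iff_norm] at hy
      simp [halfSqDistBall, hy.le]
    exact contDiffAt_const.congr_of_eventuallyEq hzero
  · exact contDiff_half_sq_max_zero.contDiffAt.comp x
      (((contDiffAt_id.sub contDiffAt_const).norm ℝ (sub_ne_zero.2 hx)).sub contDiffAt_const)

theorem hasFDerivAt_halfSqDistBall (hR : 0 ≤ R) (hx : R < ‖x - c‖) :
    HasFDerivAt (halfSqDistBall c R) ((1 - R / ‖x - c‖) • innerSL ℝ (x - c)) x := by
  have hr : 0 < ‖x - c‖ := hR.trans_lt hx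
  have h := (hasFDerivAt_norm_sub (sub_ne_zero.1 (norm_pos_iff.1 hr))).sub_const R
  have := ((hasDerivAt_pow 2 _).const_mul (1 / 2 : ℝ)).comp_hasFDerivAt x h
  refine (this.congr_of_eventuallyEq (halfSqDistBall_eventuallyEq hx)).congr_fderiv ?_
  ext y
  simp only [one_div, Nat.cast_ofNat, Nat.add_one_sub_one, pow_one, ne_eq,
    OfNat.ofNat_ne_zero, not_false_eq_true, inv_mul_cancel_left₀, map_sub, smul_apply, sub_apply,
    coe_innerSL_apply, smul_eq_mul]
  field_simp

theorem fderiv_fderiv_halfSqDistBall_apply (hR : 0 ≤ R) (hx : R < ‖x - c‖) (v w : E) :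
    fderiv ℝ (fun y => fderiv ℝ (halfSqDistBall c R) y v) x w =
      R / ‖x - c‖ ^ 3 * (⟪x - c, w⟫ * ⟪x - c, v⟫) + (1 - R / ‖x - c‖) * ⟪w, v⟫ := by
  have hxc : x - c ≠ 0 := norm_pos_iff.1 (hR.trans_lt hx)
  have hfield : (fun y => fderiv ℝ (halfSqDistBall c R) y v) =ᶠ[𝓝 x]
      fun y => (1 - R * ‖y - c‖⁻¹) * ⟪y - c, v⟫ := by
    have hnear : ∀ᶠ y in 𝓝 x, R < ‖y - c‖ := continuousAt_const.eventually_lt (by fun_prop) hx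
    filter_upwards [hnear] with y hy
    rw [(hasFDerivAt_halfSqDistBall hR hy).fderiv, div_eq_mul_inv]
    rfl
  have hinv := (hasDerivAt_inv (norm_ne_zero_iff.2 hxc)).comp_hasFDerivAt x
    (hasFDerivAt_norm_sub (sub_ne_zero.1 hxc))
  have := ((hinv.const_mul R).const_sub 1).mul
    (((hasFDerivAt_id (𝕜 := ℝ) x).sub_const c).inner ℝ (hasFDerivAt_const v x))
  simp only [Function.comp_def, id_eq, Pi.mul_def] at this
  rw [hfield.fderiv_eq, this.fderiv]
  simp only [neg_smul, smul_neg, neg_neg, add_apply, smul_apply, ContinuousLinearMap.comp_apply,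
    ContinuousLinearMap.prod_apply, ContinuousLinearMap.id_apply, zero_apply, fderivInnerCLM_apply,
    inner_zero_right, zero_add, smul_eq_mul, coe_innerSL_apply]
  field_simp
  ring

end

open Matrix in
theorem det_smul_vecMulVec_add_smul_one (z : EuclideanSpace ℝ (Fin 2)) (a b : ℝ) :
    (b • vecMulVec z z + a • 1 : Matrix (Fin 2) (Fin 2) ℝ).det = a * (a + b * ‖z‖ ^ 2) := by
  rw [det_fin_two, EuclideanSpace.real_norm_sq_eq]
  simp only [Fin.isValue, Matrix.add_apply, Matrix.smul_apply, vecMulVec_apply, smul_eq_mul,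
    one_apply_eq, mul_one, ne_eq, zero_ne_one, not_false_eq_true, one_apply_ne, mul_zero, add_zero,
    one_ne_zero, Fin.sum_univ_two]
  ring

open Matrix in
theorem hess_halfSqDistBall {c x : EuclideanSpace ℝ (Fin 2)} {R : ℝ} (hR : 0 ≤ R)
    (hx : R < ‖x - c‖) :
    Hess (halfSqDistBall c R) x =
      (R / ‖x - c‖ ^ 3) • vecMulVec (x - c) (x - c) + (1 - R / ‖x - c‖) • 1 := by
  ext i j
  rw [Hess, of_apply, fderiv_fderiv_halfSqDistBall_apply hR hx]
  simp [EuclideanSpace.inner_single_right, vecMulVec_apply, one_apply, @eq_comm _ j i]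

theorem mongeAmpere_example_C1_general (x₀ : EuclideanSpace ℝ (Fin 2)) :
    ContDiff ℝ 1 (fun x : EuclideanSpace ℝ (Fin 2) =>
        (1 / 2 : ℝ) * max 0 (‖x - x₀‖ - 0.2) ^ 2) ∧
      ConvexOn ℝ Set.univ (fun x : EuclideanSpace ℝ (Fin 2) =>
        (1 / 2 : ℝ) * max 0 (‖x - x₀‖ - 0.2) ^ 2) ∧
      ∀ x : EuclideanSpace ℝ (Fin 2), 0.2 < ‖x - x₀‖ →
        (Hess (fun y => (1 / 2 : ℝ) * max 0 (‖y - x₀‖ - 0.2) ^ 2) x).det =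
          1 - 0.2 / ‖x - x₀‖ := by
  refine ⟨contDiff_halfSqDistBall (by norm_num), convexOn_halfSqDistBall, fun x hx => ?_⟩
  have hr : 0 < ‖x - x₀‖ := lt_trans (by norm_num) hx
  calc (Hess (halfSqDistBall x₀ 0.2) x).det
      = (1 - 0.2 / ‖x - x₀‖) * (1 - 0.2 / ‖x - x₀‖ + 0.2 / ‖x - x₀‖ ^ 3 * ‖x - x₀‖ ^ 2) := by
        rw [hess_halfSqDistBall (by norm_num) hx, det_smul_vecMulVec_add_smul_one]
    _ = 1 - 0.2 / ‖x - x₀‖ := by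
        field_simp
        ring

/-- The function `u(x) = ½ (max 0 (‖x - x₀‖ - 0.2))²` with `x₀ = (1/2, 1/2)` is `C¹`
and convex on `ℝ²`, and wherever `‖x - x₀‖ > 0.2` it satisfies
`det(D²u(x)) = 1 - 0.2/‖x - x₀‖`. -/
theorem mongeAmpere_example_C1 (x₀ : EuclideanSpace ℝ (Fin 2))
    (hx₀ : x₀ 0 = 1 / 2 ∧ x₀ 1 = 1 / 2) :
    ContDiff ℝ 1 (fun x : EuclideanSpace ℝ (Fin 2) =>
        (1 / 2 : ℝ) * max 0 (‖x - x₀‖ - 0.2) ^ 2) ∧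
      ConvexOn ℝ Set.univ (fun x : EuclideanSpace ℝ (Fin 2) =>
        (1 / 2 : ℝ) * max 0 (‖x - x₀‖ - 0.2) ^ 2) ∧
      ∀ x : EuclideanSpace ℝ (Fin 2), 0.2 < ‖x - x₀‖ →
        (Hess (fun y => (1 / 2 : ℝ) * max 0 (‖y - x₀‖ - 0.2) ^ 2) x).det =
          1 - 0.2 / ‖x - x₀‖ :=
  mongeAmpere_example_C1_general x₀
end

section
/- Marsden-type identity for monomial reproduction by B-splines: for a knot sequence T = {t_i} and B-splines N_{j,n} of order n, the monomial x^m for 0 ≤ m ≤ n−1 satisfies x^m = Σ_j [(−1)^{n−1−m} ψ_{j,n}^{(n−1−m)}(0) / ((n−1)(n−2)···(m+1))] N_{j,n}(x) on the interval [t_n, t_{N+1}], where ψ_{j,n}(y) = ∏_{l=1}^{n−1}(t_{j+l} − y). -/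
/-!
Marsden's identity `(x - y) ^ (n - 1) = ∑ j, ψ_{j,n}(y) N_{j,n}(x)` holds for every `y` and
`x ∈ [t_n, t_{N+1})`. It is proved by induction on the order: expanding `N_{j,n+1}` by the
Cox–de Boor recursion and regrouping the terms by index, the two linear weights attached to
`ψ_{j,n}(y) N_{j,n}(x)` add up to `x - y`, while the boundary terms vanish by the support property
of B-splines. Differentiating `n - 1 - m` times in `y` at `y = 0` then isolates `x ^ m`.
-/

/-- B-splines of order `n` over the knot sequence `t`, defined by the
Cox–de Boor recursion. `bspline t n i` is the `i`-th B-spline of order `n`. -/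
noncomputable def bspline (t : ℕ → ℝ) : ℕ → ℕ → ℝ → ℝ
  | 0, _, _ => 0
  | 1, i, x => if t i ≤ x ∧ x < t (i + 1) then 1 else 0
  | (m + 2), i, x =>
      ((x - t i) / (t (i + m + 1) - t i)) * bspline t (m + 1) i x +
        ((t (i + m + 2) - x) / (t (i + m + 2) - t (i + 1))) * bspline t (m + 1) (i + 1) x

open Finset

section Support

variable {t : ℕ → ℝ}

theorem bspline_eq_zero_of_notMem_Ico (ht : Monotone t) :
    ∀ (n j : ℕ) {x : ℝ}, x ∉ Set.Ico (t j) (t (j + n)) → bspline t n j x = 0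
  | 0, _, _, _ => rfl
  | 1, j, x, hx => if_neg hx
  | m + 2, j, x, hx => by
    have hleft : bspline t (m + 1) j x = 0 :=
      bspline_eq_zero_of_notMem_Ico ht (m + 1) j fun h =>
        hx (Set.Ico_subset_Ico le_rfl (ht (by omega)) h)
    have hright : bspline t (m + 1) (j + 1) x = 0 :=
      bspline_eq_zero_of_notMem_Ico ht (m + 1) (j + 1) fun h =>
        hx (Set.Ico_subset_Ico (ht (by omega)) (ht (by omega)) h)
    simp [bspline, hleft, hright]

theorem sum_bspline_one (ht : Monotone t) (N : ℕ) {x : ℝ}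
    (hx : x ∈ Set.Ico (t 1) (t (N + 1))) :
    ∑ j ∈ Icc 1 N, bspline t 1 j x = 1 := by
  set g : ℕ → ℝ := fun j => if t j ≤ x then 1 else 0
  have hterm : ∀ j, bspline t 1 j x = -(g (j + 1) - g j) := by
    intro j
    have := ht (Nat.le_succ j)
    simp only [bspline, g]
    grind
  rw [sum_congr rfl fun j _ => hterm j, sum_neg_distrib, ← Ico_add_one_right_eq_Icc,
    sum_Ico_sub g (by omega)]
  simp [g, hx.1, hx.2.not_ge]

end Support

section Marsden

variable (t : ℕ → ℝ)

/-- The paper's `ψ_{j,p+1}`, which pairs with the B-spline of order `p + 1`. -/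
noncomputable def marsdenPsi (p j : ℕ) (y : ℝ) : ℝ :=
  ∏ l ∈ Icc 1 p, (t (j + l) - y)

theorem marsdenPsi_succ (p j : ℕ) (y : ℝ) :
    marsdenPsi t (p + 1) j y = marsdenPsi t p j y * (t (j + p + 1) - y) :=
  prod_Icc_succ_top (by omega) _

theorem marsdenPsi_succ' (p j : ℕ) (y : ℝ) :
    marsdenPsi t (p + 1) j y = (t (j + 1) - y) * marsdenPsi t p (j + 1) y := by
  induction p with
  | zero => simp [marsdenPsi]
  | succ p ih =>
    rw [marsdenPsi_succ, ih, marsdenPsi_succ, mul_assoc,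
      show j + 1 + p + 1 = j + (p + 1) + 1 by omega]

noncomputable def marsdenTerm (p : ℕ) (y x : ℝ) (j : ℕ) : ℝ :=
  marsdenPsi t p j y * bspline t (p + 1) j x

noncomputable def marsdenLeft (p : ℕ) (y x : ℝ) (j : ℕ) : ℝ :=
  (x - t j) * (t (j + p + 1) - y) / (t (j + p + 1) - t j) * marsdenTerm t p y x j

noncomputable def marsdenRight (p : ℕ) (y x : ℝ) (j : ℕ) : ℝ :=
  (t (j + p + 1) - x) * (t j - y) / (t (j + p + 1) - t j) * marsdenTerm t p y x j

theorem marsdenTerm_succ (p : ℕ) (y x : ℝ) (j : ℕ) :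
    marsdenTerm t (p + 1) y x j = marsdenLeft t p y x j + marsdenRight t p y x (j + 1) := by
  have hB : bspline t (p + 2) j x =
      (x - t j) / (t (j + p + 1) - t j) * bspline t (p + 1) j x +
        (t (j + p + 2) - x) / (t (j + p + 2) - t (j + 1)) * bspline t (p + 1) (j + 1) x :=
    rfl
  simp only [marsdenLeft, marsdenRight, marsdenTerm, hB]
  rw [mul_add]
  congr 1
  · rw [marsdenPsi_succ]; ring
  · rw [marsdenPsi_succ', show j + 1 + p + 1 = j + p + 2 by omega]; ring

variable {t}

theorem marsdenLeft_add_marsdenRight (ht : Monotone t) (p : ℕ) (y x : ℝ) (j : ℕ) :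
    marsdenLeft t p y x j + marsdenRight t p y x j = (x - y) * marsdenTerm t p y x j := by
  by_cases hknots : t (j + p + 1) = t j
  · have hB : bspline t (p + 1) j x = 0 :=
      bspline_eq_zero_of_notMem_Ico ht _ _ (by simp [← add_assoc, hknots])
    simp [marsdenLeft, marsdenRight, marsdenTerm, hB]
  · have hden : t (j + p + 1) - t j ≠ 0 := sub_ne_zero.mpr hknots
    simp only [marsdenLeft, marsdenRight]
    field_simp
    ring

theorem sum_Icc_add_shift {M : Type*} [AddCommMonoid M] (f g : ℕ → M) (N : ℕ)
    (hf : f (N + 1) = 0) (hg : g 1 = 0) :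
    ∑ j ∈ Icc 1 N, (f j + g (j + 1)) = ∑ j ∈ Icc 1 (N + 1), (f j + g j) := by
  simp only [sum_add_distrib, ← Ico_add_one_right_eq_Icc]
  rw [sum_Ico_succ_top (b := N + 1) (by omega) f, hf, add_zero,
    sum_eq_sum_Ico_succ_bot (b := N + 1 + 1) (by omega) g, hg,
    zero_add, sum_Ico_add']

theorem sum_marsdenTerm (ht : Monotone t) (p N : ℕ) (y : ℝ) {x : ℝ}
    (hx : x ∈ Set.Ico (t (p + 1)) (t (N + 1))) :
    ∑ j ∈ Icc 1 N, marsdenTerm t p y x j = (x - y) ^ p := by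
  induction p generalizing N with
  | zero => simpa [marsdenTerm, marsdenPsi] using sum_bspline_one ht N hx
  | succ p ih =>
    have hlast : marsdenLeft t p y x (N + 1) = 0 := by
      have : bspline t (p + 1) (N + 1) x = 0 :=
        bspline_eq_zero_of_notMem_Ico ht _ _ fun h => hx.2.not_ge h.1
      simp [marsdenLeft, marsdenTerm, this]
    have hfirst : marsdenRight t p y x 1 = 0 := by
      have : bspline t (p + 1) 1 x = 0 :=
        bspline_eq_zero_of_notMem_Ico ht _ _ fun h => h.2.not_ge (by rw [add_comm]; exact hx.1)
      simp [marsdenRight, marsdenTerm, this]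
    have hx' : x ∈ Set.Ico (t (p + 1)) (t (N + 1 + 1)) :=
      ⟨(ht (by omega)).trans hx.1, hx.2.trans_le (ht (by omega))⟩
    simp only [marsdenTerm_succ]
    rw [sum_Icc_add_shift _ _ N hlast hfirst]
    simp only [marsdenLeft_add_marsdenRight ht, ← mul_sum, ih (N + 1) hx', pow_succ']

end Marsden

theorem iteratedDeriv_const_sub_pow {𝕜 : Type*} [NontriviallyNormedField 𝕜] (x y : 𝕜)
    (p k : ℕ) :
    iteratedDeriv k (fun z => (x - z) ^ p) y =
      (-1) ^ k * p.descFactorial k * (x - y) ^ (p - k) := by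
  simp only [iteratedDeriv_comp_const_sub k (· ^ p), iteratedDeriv_pow, smul_eq_mul, mul_assoc]

theorem prod_Icc_succ_eq_descFactorial {m p : ℕ} (h : m ≤ p) :
    ∏ k ∈ Icc (m + 1) p, k = p.descFactorial (p - m) := by
  induction p, h using Nat.le_induction with
  | base => simp
  | succ p hmp ih =>
    rw [prod_Icc_succ_top (by omega), ih, show p + 1 - m = p - m + 1 by omega,
      Nat.succ_descFactorial_succ, mul_comm]

theorem sum_iteratedDeriv_marsdenPsi_mul_bspline {t : ℕ → ℝ} (ht : Monotone t) (p N k : ℕ)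
    {x : ℝ} (hx : x ∈ Set.Ico (t (p + 1)) (t (N + 1))) :
    ∑ j ∈ Icc 1 N, iteratedDeriv k (marsdenPsi t p j) 0 * bspline t (p + 1) j x =
      (-1) ^ k * p.descFactorial k * x ^ (p - k) := by
  have hsum : (fun y => ∑ j ∈ Icc 1 N, bspline t (p + 1) j x * marsdenPsi t p j y) =
      fun y => (x - y) ^ p := by
    funext y
    rw [← sum_marsdenTerm ht p N y hx]
    exact sum_congr rfl fun j _ => mul_comm _ _
  have hderiv := congrArg (iteratedDeriv k · 0) hsum
  simp only [iteratedDeriv_const_sub_pow, sub_zero] at hderiv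
  rw [← hderiv, iteratedDeriv_fun_sum fun j _ => by unfold marsdenPsi; fun_prop]
  refine sum_congr rfl fun j _ => ?_
  rw [iteratedDeriv_const_mul_field, mul_comm]

theorem pow_eq_sum_iteratedDeriv_marsdenPsi_mul_bspline {t : ℕ → ℝ} (ht : Monotone t)
    (p N : ℕ) {m : ℕ} (hm : m ≤ p) {x : ℝ} (hx : x ∈ Set.Ico (t (p + 1)) (t (N + 1))) :
    x ^ m = ∑ j ∈ Icc 1 N, ((-1) ^ (p - m) * iteratedDeriv (p - m) (marsdenPsi t p j) 0 /
      p.descFactorial (p - m)) * bspline t (p + 1) j x := by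
  have hidentity := sum_iteratedDeriv_marsdenPsi_mul_bspline ht p N (p - m) hx
  rw [Nat.sub_sub_self hm] at hidentity
  have hdenom : (p.descFactorial (p - m) : ℝ) ≠ 0 := by
    exact_mod_cast (Nat.descFactorial_pos.mpr (by omega)).ne'
  calc x ^ m = (-1) ^ (p - m) / p.descFactorial (p - m) *
        ((-1) ^ (p - m) * p.descFactorial (p - m) * x ^ m) := by
        field_simp
        rw [pow_right_comm, neg_one_sq, one_pow, mul_one]
    _ = _ := by
        rw [← hidentity, mul_sum]
        exact sum_congr rfl fun j _ => by ring

theorem bspline_marsden_identity_general (t : ℕ → ℝ) (ht : StrictMono t)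
    (n N : ℕ) (hn : 1 ≤ n) (m : ℕ) (hm : m ≤ n - 1)
    (x : ℝ) (hx : x ∈ Set.Ico (t n) (t (N + 1))) :
    x ^ m =
      ∑ j ∈ Finset.Icc 1 N,
        ((-1 : ℝ) ^ (n - 1 - m) *
            iteratedDeriv (n - 1 - m)
              (fun y : ℝ => ∏ l ∈ Finset.Icc 1 (n - 1), (t (j + l) - y)) 0 /
          ∏ k ∈ Finset.Icc (m + 1) (n - 1), (k : ℝ)) * bspline t n j x := by
  obtain ⟨p, rfl⟩ : ∃ p, n = p + 1 := ⟨n - 1, by omega⟩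
  simp only [Nat.add_sub_cancel] at hm ⊢
  rw [← Nat.cast_prod, prod_Icc_succ_eq_descFactorial hm]
  exact pow_eq_sum_iteratedDeriv_marsdenPsi_mul_bspline ht.monotone p N hm hx

/-- Marsden-type identity: for `0 ≤ m ≤ n - 1` the monomial `x^m` is reproduced on
`[t_n, t_{N+1})` by the B-splines of order `n`, with coefficients given by the
`(n-1-m)`-th derivative at `0` of `ψ_{j,n}(y) = ∏_{l=1}^{n-1} (t_{j+l} - y)` divided by
`(n-1)(n-2)⋯(m+1)`. -/
theorem bspline_marsden_identity (t : ℕ → ℝ) (ht : StrictMono t)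
    (n N : ℕ) (hn : 1 ≤ n) (hN : n ≤ N) (m : ℕ) (hm : m ≤ n - 1)
    (x : ℝ) (hx : x ∈ Set.Ico (t n) (t (N + 1))) :
    x ^ m =
      ∑ j ∈ Finset.Icc 1 N,
        ((-1 : ℝ) ^ (n - 1 - m) *
            iteratedDeriv (n - 1 - m)
              (fun y : ℝ => ∏ l ∈ Finset.Icc 1 (n - 1), (t (j + l) - y)) 0 /
          ∏ k ∈ Finset.Icc (m + 1) (n - 1), (k : ℝ)) * bspline t n j x :=
  bspline_marsden_identity_general t ht n N hn m hm x hx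
end
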